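/- arXiv:2001.02164 — 6 statements merged into one kernel-verified Lean document; each statement's English description precedes it below -/
import Mathlib

section
/- For α a normalized S¹-valued 2-cocycle on G and g,h ∈ G, a ∈ A with A ⊴ G, the following cocycle identity holds: α(g⁻¹a, g)·α(g, g⁻¹a)⁻¹·α(h⁻¹g⁻¹ag, h)·α(h, h⁻¹g⁻¹ag)⁻¹ = α(h⁻¹g⁻¹a, gh)·α(gh, h⁻¹g⁻¹a)⁻¹. -/
/-!
Writing `c = h⁻¹g⁻¹a`, the identity reads
`α(hc, g)/α(g, hc) · α(cg, h)/α(h, cg) = α(c, gh)/α(gh, c)`, which holds for arbitrary `c, g, h`: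
multiply the cocycle relations at `(c, g, h)`, `(g, h, c)` and `(h, c, g)` and cancel the common
factor `α(c, g) α(g, h) α(h, c)`.
-/

theorem cocycle_swap_ratio_mul {G M : Type*} [Mul G] [CommGroup M] (α : G → G → M)
    (hα : ∀ x y z : G, α (x * y) z * α x y = α x (y * z) * α y z) (c g h : G) :
    α (h * c) g / α g (h * c) * (α (c * g) h / α h (c * g)) = α c (g * h) / α (g * h) c := by
  rw [div_mul_div_comm, div_eq_div_iff_mul_eq_mul]
  refine mul_right_cancel (b := α c g * α g h * α h c) ?_
  calc α (h * c) g * α (c * g) h * α (g * h) c * (α c g * α g h * α h c)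
      = (α (c * g) h * α c g) * (α (g * h) c * α g h) * (α (h * c) g * α h c) := by ac_rfl
    _ = (α c (g * h) * α g h) * (α g (h * c) * α h c) * (α h (c * g) * α c g) := by
        rw [hα c g h, hα g h c, hα h c g]
    _ = α c (g * h) * (α g (h * c) * α h (c * g)) * (α c g * α g h * α h c) := by ac_rfl

theorem stmt7_general {G : Type*} [Group G] (α : G → G → Circle)
    (hcocycle : ∀ x y z : G, α (x * y) z * α x y = α x (y * z) * α y z)
    (g h a : G) :
    α (g⁻¹ * a) g * (α g (g⁻¹ * a))⁻¹ *
      α (h⁻¹ * g⁻¹ * a * g) h * (α h (h⁻¹ * g⁻¹ * a * g))⁻¹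
    = α (h⁻¹ * g⁻¹ * a) (g * h) * (α (g * h) (h⁻¹ * g⁻¹ * a))⁻¹ := by
  have key := cocycle_swap_ratio_mul α hcocycle (h⁻¹ * g⁻¹ * a) g h
  rw [show h * (h⁻¹ * g⁻¹ * a) = g⁻¹ * a by group] at key
  simpa only [div_eq_mul_inv, mul_assoc] using key

/-- The cocycle identity
`α(g⁻¹a, g)·α(g, g⁻¹a)⁻¹·α(h⁻¹g⁻¹ag, h)·α(h, h⁻¹g⁻¹ag)⁻¹ = α(h⁻¹g⁻¹a, gh)·α(gh, h⁻¹g⁻¹a)⁻¹`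
for a normalized `S¹`-valued 2-cocycle `α` on `G`. -/
theorem stmt7 {G : Type*} [Group G] [Finite G] (α : G → G → Circle)
    (hcocycle : ∀ x y z : G, α (x * y) z * α x y = α x (y * z) * α y z)
    (hnorm₁ : ∀ x : G, α x 1 = 1) (hnorm₂ : ∀ x : G, α 1 x = 1)
    (g h a : G) :
    α (g⁻¹ * a) g * (α g (g⁻¹ * a))⁻¹ *
      α (h⁻¹ * g⁻¹ * a * g) h * (α h (h⁻¹ * g⁻¹ * a * g))⁻¹
    = α (h⁻¹ * g⁻¹ * a) (g * h) * (α (g * h) (h⁻¹ * g⁻¹ * a))⁻¹ :=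
  stmt7_general α hcocycle g h a
end

section
/- Let ρ: A → U(V) be an irreducible α-representation of A ⊴ G such that g·ρ ≅ ρ for all g ∈ G, with chosen unitaries M_q ∈ U(V) (M_1 = Id) satisfying (σ(q)·ρ)(a) = M_q⁻¹ρ(a)M_q for all a ∈ A. Then for all q₁,q₂ ∈ Q the operator τ(q₁,q₂)·ρ(χ(q₁,q₂))·M_{q₂}⁻¹M_{q₁}⁻¹M_{q₁q₂} is a scalar multiple of the identity, where τ(q₁,q₂) = α(σ(q₁q₂), χ(q₁,q₂))⁻¹α(σ(q₁),σ(q₂)) and χ(q₁,q₂) = σ(q₁q₂)⁻¹σ(q₁)σ(q₂). -/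
/-- Twisted conjugation action. -/
noncomputable def twistedAct {G : Type*} [Group G] (A : Subgroup G) (hA : A.Normal)
    (α : G → G → Circle) {d : ℕ}
    (g : G) (ρ : A → Matrix (Fin d) (Fin d) ℂ) : A → Matrix (Fin d) (Fin d) ℂ :=
  fun a => ((α (g⁻¹ * a) g : ℂ) * (((α g (g⁻¹ * a))⁻¹ : Circle) : ℂ)) •
    ρ ⟨g⁻¹ * a * g, by simpa using hA.conj_mem (a : G) a.2 g⁻¹⟩

lemma schurAux {d : ℕ} (hd : 0 < d) {ι : Type*} (ρ : ι → Matrix (Fin d) (Fin d) ℂ)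
    (hirr : ∀ W : Submodule ℂ (Fin d → ℂ),
      (∀ a : ι, W.map (Matrix.toLin' (ρ a)) ≤ W) → W = ⊥ ∨ W = ⊤)
    (N : Matrix (Fin d) (Fin d) ℂ) (hN : ∀ a, ρ a * N = N * ρ a) :
    ∃ c : ℂ, N = c • 1 := by
  haveI : NeZero d := ⟨hd.ne'⟩
  obtain ⟨μ, hμ⟩ := Module.End.exists_eigenvalue (Matrix.toLin' N)
  have hW : ∀ a : ι, (Module.End.eigenspace (Matrix.toLin' N) μ).map (Matrix.toLin' (ρ a)) ≤
      Module.End.eigenspace (Matrix.toLin' N) μ := by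
    intro a x hx
    simp only [Submodule.mem_map] at hx
    obtain ⟨v, hv, rfl⟩ := hx
    rw [Module.End.mem_eigenspace_iff] at hv ⊢
    have : Matrix.toLin' N (Matrix.toLin' (ρ a) v)
        = Matrix.toLin' (ρ a) (Matrix.toLin' N v) := by
      have h1 := congrFun (congrArg DFunLike.coe (Matrix.toLin'_mul N (ρ a))) v
      have h2 := congrFun (congrArg DFunLike.coe (Matrix.toLin'_mul (ρ a) N)) v
      simp only [LinearMap.comp_apply] at h1 h2
      rw [← h1, ← h2, hN]
    rw [this, hv, map_smul]
  rcases hirr _ hW with h | h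
  · exact absurd h hμ
  · refine ⟨μ, Matrix.toLin'.injective (LinearMap.ext fun v => ?_)⟩
    have hv : v ∈ Module.End.eigenspace (Matrix.toLin' N) μ := h ▸ Submodule.mem_top
    rw [Module.End.mem_eigenspace_iff] at hv
    simp [hv]

section scalars
variable {G : Type*} [Group G] (α : G → G → Circle)

lemma cocC (hc : ∀ g h k : G, α (g * h) k * α g h = α g (h * k) * α h k) (x y z : G) :
    (α (x*y) z : ℂ) * α x y = (α x (y*z) : ℂ) * α y z := by
  have := congrArg (fun z : Circle => (z : ℂ)) (hc x y z)
  simpa using this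

lemma conv2' (hc : ∀ g h k : G, α (g * h) k * α g h = α g (h * k) * α h k) (h B B' : G)
    (hB' : B' = h⁻¹*B*h) :
    (α (h⁻¹*B) h : ℂ) * α h B' = (α B h : ℂ) * α h (h⁻¹*B) := by
  subst hB'
  have e := cocC α hc h (h⁻¹*B) h
  rw [show h*(h⁻¹*B) = B by group] at e
  linear_combination -e

lemma fm' (hc : ∀ g h k : G, α (g * h) k * α g h = α g (h * k) * α h k) (x y z w' w'' u : G)
    (hw' : w' = y*z*y⁻¹) (hw'' : w'' = x*w'*x⁻¹) (hu : u = x*y) :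
    (α w'' u : ℂ) * α x w' * α y z = (α u z : ℂ) * α w'' x * α w' y := by
  subst hw' hw'' hu
  have e1 := cocC α hc (x*(y*z*y⁻¹)*x⁻¹) x y
  rw [show (x*(y*z*y⁻¹)*x⁻¹)*x = x*(y*z*y⁻¹) by group] at e1
  have e2 := cocC α hc x (y*z*y⁻¹) y
  rw [show (y*z*y⁻¹)*y = y*z by group] at e2
  have e3 := cocC α hc x y z
  have key : ((α (x*(y*z*y⁻¹)*x⁻¹) (x*y) : ℂ) * α x (y*z*y⁻¹) * α y z) * α x y
      = ((α (x*y) z : ℂ) * α (x*(y*z*y⁻¹)*x⁻¹) x * α (y*z*y⁻¹) y) * α x y := by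
    linear_combination (-((α x (y*z*y⁻¹) : ℂ) * α y z)) * e1
      + ((α (x*(y*z*y⁻¹)*x⁻¹) x : ℂ) * α y z) * e2
      + (-((α (x*(y*z*y⁻¹)*x⁻¹) x : ℂ) * α (y*z*y⁻¹) y)) * e3
  exact mul_right_cancel₀ (Circle.coe_ne_zero _) key

lemma nuEq (hc : ∀ g h k : G, α (g * h) k * α g h = α g (h * k) * α h k)
    (g g₁ g₂ a bG c₂G a'G χG : G)
    (hb : bG = g*a*g⁻¹) (hc₂ : c₂G = g₁⁻¹*bG*g₁) (ha' : a'G = g₂⁻¹*c₂G*g₂)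
    (hχ : χG = g⁻¹*g₁*g₂) :
    ((α (g⁻¹*bG) g : ℂ) * ((α g (g⁻¹*bG) : ℂ))⁻¹)⁻¹
      * ((α (g₁⁻¹*bG) g₁ : ℂ) * ((α g₁ (g₁⁻¹*bG) : ℂ))⁻¹)
      * ((α (g₂⁻¹*c₂G) g₂ : ℂ) * ((α g₂ (g₂⁻¹*c₂G) : ℂ))⁻¹)
      * (α χG a'G : ℂ)
    = (α a χG : ℂ) := by
  have H1 := conv2' α hc g bG a (by rw [hb]; group)
  have H2 := conv2' α hc g₁ bG c₂G hc₂
  have H3 := conv2' α hc g₂ c₂G a'G ha'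
  have F1 := fm' α hc g₁ g₂ a'G c₂G bG (g₁*g₂) (by rw [ha']; group) (by rw [hc₂]; group) rfl
  have F2 := fm' α hc g χG a'G a bG (g₁*g₂) (by rw [hχ, ha', hc₂, hb]; group) hb
    (by rw [hχ]; group)
  set P1 := (α (g⁻¹*bG) g : ℂ); set Q1 := (α g (g⁻¹*bG) : ℂ)
  set P2 := (α (g₁⁻¹*bG) g₁ : ℂ); set Q2 := (α g₁ (g₁⁻¹*bG) : ℂ)
  set P3 := (α (g₂⁻¹*c₂G) g₂ : ℂ); set Q3 := (α g₂ (g₂⁻¹*c₂G) : ℂ)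
  set u1 := (α bG (g₁*g₂) : ℂ); set u2 := (α g₁ c₂G : ℂ); set u3 := (α g₂ a'G : ℂ)
  set u4 := (α (g₁*g₂) a'G : ℂ); set u5 := (α bG g₁ : ℂ); set u6 := (α c₂G g₂ : ℂ)
  set u7 := (α g a : ℂ); set u8 := (α χG a'G : ℂ); set u9 := (α bG g : ℂ)
  set u10 := (α a χG : ℂ)
  have key : (P2*P3*u8*Q1) * (u7*u1*u2*u3) = (u10*P1*Q2*Q3) * (u7*u1*u2*u3) := by
    linear_combination (P3*u8*Q1*u7*u1*u3) * H2 + (u5*Q2*u8*Q1*u7*u1) * H3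
      + (u5*Q2*u6*Q3*Q1) * F2 - (u10*Q2*Q3*u1*u2*u3) * H1 - (u10*u9*Q1*Q2*Q3) * F1
  have key2 : P2*P3*u8*Q1 = u10*P1*Q2*Q3 :=
    mul_right_cancel₀ (by
      exact mul_ne_zero (mul_ne_zero (mul_ne_zero (Circle.coe_ne_zero _)
        (Circle.coe_ne_zero _)) (Circle.coe_ne_zero _)) (Circle.coe_ne_zero _)) key
  have hP1 : P1 ≠ 0 := Circle.coe_ne_zero _
  have hQ1 : Q1 ≠ 0 := Circle.coe_ne_zero _
  have hQ2 : Q2 ≠ 0 := Circle.coe_ne_zero _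
  have hQ3 : Q3 ≠ 0 := Circle.coe_ne_zero _
  field_simp
  linear_combination key2
end scalars

/-- If `ρ` is an irreducible `α`-representation of `A ⊴ G` fixed by the twisted
`G`-action, with chosen unitaries `M_q` intertwining `σ(q)·ρ` and `ρ`, then
`τ(q₁,q₂)·ρ(χ(q₁,q₂))·M_{q₂}⁻¹M_{q₁}⁻¹M_{q₁q₂}` is a scalar multiple of the identity. -/
theorem stmt11 {G : Type*} [Group G] [Finite G] (A : Subgroup G) [hA : A.Normal]
    (α : G → G → Circle)
    (hcocycle : ∀ g h k : G, α (g * h) k * α g h = α g (h * k) * α h k)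
    (hnorm₁ : ∀ g : G, α g 1 = 1) (hnorm₂ : ∀ g : G, α 1 g = 1)
    {d : ℕ} (hd : 0 < d) (ρ : A → Matrix (Fin d) (Fin d) ℂ)
    (hunitary : ∀ a : A, ρ a ∈ Matrix.unitaryGroup (Fin d) ℂ)
    (h1 : ρ 1 = 1)
    (hmul : ∀ a b : A, ρ a * ρ b = ((α a b : ℂ)) • ρ (a * b))
    (hirr : ∀ W : Submodule ℂ (Fin d → ℂ),
      (∀ a : A, W.map (Matrix.toLin' (ρ a)) ≤ W) → W = ⊥ ∨ W = ⊤)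
    (σ : G ⧸ A → G)
    (hσ : ∀ q : G ⧸ A, QuotientGroup.mk (σ q) = q) (hσ1 : σ 1 = 1)
    (hχmem : ∀ q₁ q₂ : G ⧸ A, (σ (q₁ * q₂))⁻¹ * σ q₁ * σ q₂ ∈ A)
    (M : G ⧸ A → Matrix (Fin d) (Fin d) ℂ)
    (hMunitary : ∀ q : G ⧸ A, M q ∈ Matrix.unitaryGroup (Fin d) ℂ)
    (hM1 : M 1 = 1)
    (hM : ∀ (q : G ⧸ A) (a : A),
      twistedAct A hA α (σ q) ρ a = (M q)⁻¹ * ρ a * M q)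
    (q₁ q₂ : G ⧸ A) :
    ∃ c : ℂ,
      (((α (σ (q₁ * q₂)) ((σ (q₁ * q₂))⁻¹ * σ q₁ * σ q₂))⁻¹ * α (σ q₁) (σ q₂) : Circle) : ℂ) •
        (ρ ⟨(σ (q₁ * q₂))⁻¹ * σ q₁ * σ q₂, hχmem q₁ q₂⟩ *
          (M q₂)⁻¹ * (M q₁)⁻¹ * M (q₁ * q₂))
      = c • (1 : Matrix (Fin d) (Fin d) ℂ) := by
  classical
  have memConj : ∀ (y x : G), x ∈ A → y⁻¹ * x * y ∈ A := fun y x hx => by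
    simpa using hA.conj_mem x hx y⁻¹
  have memConj' : ∀ (y x : G), x ∈ A → y * x * y⁻¹ ∈ A := fun y x hx => hA.conj_mem x hx y
  have hMl : ∀ q, (M q)⁻¹ * M q = 1 := fun q => by
    rw [Matrix.inv_eq_left_inv (hMunitary q).1]; exact (hMunitary q).1
  have hMr : ∀ q, M q * (M q)⁻¹ = 1 := fun q => by
    rw [Matrix.inv_eq_left_inv (hMunitary q).1]; exact (hMunitary q).2
  -- the basic intertwining relation, with explicit subgroup elements
  have keyM : ∀ (q : G ⧸ A) (x : G) (hx : x ∈ A),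
      ρ ⟨x, hx⟩ * M q = ((α ((σ q)⁻¹ * x) (σ q) : ℂ) * ((α (σ q) ((σ q)⁻¹ * x) : ℂ))⁻¹) •
        (M q * ρ ⟨(σ q)⁻¹ * x * σ q, memConj (σ q) x hx⟩) := by
    intro q x hx
    have h := hM q ⟨x, hx⟩
    simp only [twistedAct, Circle.coe_inv] at h
    calc ρ ⟨x, hx⟩ * M q
        = M q * ((M q)⁻¹ * ρ ⟨x, hx⟩ * M q) := by
          rw [← mul_assoc, ← mul_assoc, hMr q, one_mul]
      _ = M q * (((α ((σ q)⁻¹ * x) (σ q) : ℂ) * ((α (σ q) ((σ q)⁻¹ * x) : ℂ))⁻¹) •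
            ρ ⟨(σ q)⁻¹ * x * σ q, memConj (σ q) x hx⟩) := by rw [← h]
      _ = _ := mul_smul_comm _ _ _
  have scal_ne : ∀ (u v : G), (α u v : ℂ) * ((α v u : ℂ))⁻¹ ≠ 0 := fun u v =>
    mul_ne_zero (Circle.coe_ne_zero _) (inv_ne_zero (Circle.coe_ne_zero _))
  -- push ρ leftwards through M q
  have sR : ∀ (q : G ⧸ A) (x : G) (hx : x ∈ A),
      M q * ρ ⟨x, hx⟩ = ((α ((σ q)⁻¹ * (σ q * x * (σ q)⁻¹)) (σ q) : ℂ) *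
          ((α (σ q) ((σ q)⁻¹ * (σ q * x * (σ q)⁻¹)) : ℂ))⁻¹)⁻¹ •
        (ρ ⟨σ q * x * (σ q)⁻¹, memConj' (σ q) x hx⟩ * M q) := by
    intro q x hx
    have k := keyM q (σ q * x * (σ q)⁻¹) (memConj' (σ q) x hx)
    have e : (⟨(σ q)⁻¹ * (σ q * x * (σ q)⁻¹) * σ q,
        memConj (σ q) _ (memConj' (σ q) x hx)⟩ : A) = ⟨x, hx⟩ := Subtype.ext (by group)
    rw [e] at k
    have hne : ((α ((σ q)⁻¹ * (σ q * x * (σ q)⁻¹)) (σ q) : ℂ) *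
        ((α (σ q) ((σ q)⁻¹ * (σ q * x * (σ q)⁻¹)) : ℂ))⁻¹) ≠ 0 :=
      mul_ne_zero (Circle.coe_ne_zero _) (inv_ne_zero (Circle.coe_ne_zero _))
    rw [k, smul_smul, inv_mul_cancel₀ hne, one_smul]
  -- push ρ rightwards through (M q)⁻¹
  have sL : ∀ (q : G ⧸ A) (x : G) (hx : x ∈ A),
      (M q)⁻¹ * ρ ⟨x, hx⟩ = ((α ((σ q)⁻¹ * x) (σ q) : ℂ) * ((α (σ q) ((σ q)⁻¹ * x) : ℂ))⁻¹) •
        (ρ ⟨(σ q)⁻¹ * x * σ q, memConj (σ q) x hx⟩ * (M q)⁻¹) := by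
    intro q x hx
    calc (M q)⁻¹ * ρ ⟨x, hx⟩
        = (M q)⁻¹ * (ρ ⟨x, hx⟩ * M q) * (M q)⁻¹ := by
          rw [mul_assoc, mul_assoc, hMr q, mul_one]
      _ = (M q)⁻¹ * (((α ((σ q)⁻¹ * x) (σ q) : ℂ) * ((α (σ q) ((σ q)⁻¹ * x) : ℂ))⁻¹) •
            (M q * ρ ⟨(σ q)⁻¹ * x * σ q, memConj (σ q) x hx⟩)) * (M q)⁻¹ := by
          rw [keyM q x hx]
      _ = ((α ((σ q)⁻¹ * x) (σ q) : ℂ) * ((α (σ q) ((σ q)⁻¹ * x) : ℂ))⁻¹) •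
            ((M q)⁻¹ * M q * (ρ ⟨(σ q)⁻¹ * x * σ q, memConj (σ q) x hx⟩ * (M q)⁻¹)) := by
          simp only [mul_smul_comm, smul_mul_assoc, mul_assoc]
      _ = _ := by rw [hMl q, one_mul]
  -- the commutation relation
  have hcomm : ∀ (x : G) (hx : x ∈ A),
      ρ ⟨x, hx⟩ * (ρ ⟨(σ (q₁ * q₂))⁻¹ * σ q₁ * σ q₂, hχmem q₁ q₂⟩ *
          (M q₂)⁻¹ * (M q₁)⁻¹ * M (q₁ * q₂))
      = (ρ ⟨(σ (q₁ * q₂))⁻¹ * σ q₁ * σ q₂, hχmem q₁ q₂⟩ *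
          (M q₂)⁻¹ * (M q₁)⁻¹ * M (q₁ * q₂)) * ρ ⟨x, hx⟩ := by
    intro x hx
    have h1 := sR (q₁ * q₂) x hx
    have h2 := sL q₁ (σ (q₁ * q₂) * x * (σ (q₁ * q₂))⁻¹) (memConj' _ x hx)
    have h3 := sL q₂ ((σ q₁)⁻¹ * (σ (q₁ * q₂) * x * (σ (q₁ * q₂))⁻¹) * σ q₁)
      (memConj _ _ (memConj' _ x hx))
    -- names for the three scalars
    set L1 : ℂ := ((α ((σ (q₁*q₂))⁻¹ * (σ (q₁*q₂) * x * (σ (q₁*q₂))⁻¹)) (σ (q₁*q₂)) : ℂ) *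
        ((α (σ (q₁*q₂)) ((σ (q₁*q₂))⁻¹ * (σ (q₁*q₂) * x * (σ (q₁*q₂))⁻¹)) : ℂ))⁻¹) with hL1
    set L2 : ℂ := ((α ((σ q₁)⁻¹ * (σ (q₁*q₂) * x * (σ (q₁*q₂))⁻¹)) (σ q₁) : ℂ) *
        ((α (σ q₁) ((σ q₁)⁻¹ * (σ (q₁*q₂) * x * (σ (q₁*q₂))⁻¹)) : ℂ))⁻¹) with hL2
    set L3 : ℂ := ((α ((σ q₂)⁻¹ * ((σ q₁)⁻¹ * (σ (q₁*q₂) * x * (σ (q₁*q₂))⁻¹) * σ q₁)) (σ q₂) : ℂ) *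
        ((α (σ q₂) ((σ q₂)⁻¹ * ((σ q₁)⁻¹ * (σ (q₁*q₂) * x * (σ (q₁*q₂))⁻¹) * σ q₁)) : ℂ))⁻¹) with hL3
    have hAeq : (⟨(σ (q₁ * q₂))⁻¹ * σ q₁ * σ q₂, hχmem q₁ q₂⟩ : A) *
        ⟨(σ q₂)⁻¹ * ((σ q₁)⁻¹ * (σ (q₁*q₂) * x * (σ (q₁*q₂))⁻¹) * σ q₁) * σ q₂,
          memConj _ _ (memConj _ _ (memConj' _ x hx))⟩
        = (⟨x, hx⟩ : A) * ⟨(σ (q₁ * q₂))⁻¹ * σ q₁ * σ q₂, hχmem q₁ q₂⟩ := by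
      apply Subtype.ext
      simp only [Subgroup.coe_mul]
      group
    have eqR : (ρ ⟨(σ (q₁ * q₂))⁻¹ * σ q₁ * σ q₂, hχmem q₁ q₂⟩ *
          (M q₂)⁻¹ * (M q₁)⁻¹ * M (q₁ * q₂)) * ρ ⟨x, hx⟩
        = (L1⁻¹ * (L2 * (L3 *
            (α ((σ (q₁ * q₂))⁻¹ * σ q₁ * σ q₂)
              ((σ q₂)⁻¹ * ((σ q₁)⁻¹ * (σ (q₁*q₂) * x * (σ (q₁*q₂))⁻¹) * σ q₁) * σ q₂) : ℂ)))) •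
          (ρ ((⟨x, hx⟩ : A) * ⟨(σ (q₁ * q₂))⁻¹ * σ q₁ * σ q₂, hχmem q₁ q₂⟩) *
            (M q₂)⁻¹ * (M q₁)⁻¹ * M (q₁ * q₂)) := by
      calc (ρ ⟨(σ (q₁ * q₂))⁻¹ * σ q₁ * σ q₂, hχmem q₁ q₂⟩ *
          (M q₂)⁻¹ * (M q₁)⁻¹ * M (q₁ * q₂)) * ρ ⟨x, hx⟩
          = ρ ⟨(σ (q₁ * q₂))⁻¹ * σ q₁ * σ q₂, hχmem q₁ q₂⟩ *
            (M q₂)⁻¹ * (M q₁)⁻¹ * (M (q₁ * q₂) * ρ ⟨x, hx⟩) := by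
            rw [mul_assoc]
        _ = L1⁻¹ • (ρ ⟨(σ (q₁ * q₂))⁻¹ * σ q₁ * σ q₂, hχmem q₁ q₂⟩ *
            (M q₂)⁻¹ * ((M q₁)⁻¹ * ρ ⟨σ (q₁*q₂) * x * (σ (q₁*q₂))⁻¹, memConj' _ x hx⟩) *
            M (q₁ * q₂)) := by
            rw [h1, mul_smul_comm]; congr 1; simp only [mul_assoc]
        _ = (L1⁻¹ * L2) • (ρ ⟨(σ (q₁ * q₂))⁻¹ * σ q₁ * σ q₂, hχmem q₁ q₂⟩ *
            ((M q₂)⁻¹ * ρ ⟨(σ q₁)⁻¹ * (σ (q₁*q₂) * x * (σ (q₁*q₂))⁻¹) * σ q₁,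
              memConj _ _ (memConj' _ x hx)⟩) *
            ((M q₁)⁻¹ * M (q₁ * q₂))) := by
            rw [h2]; simp only [mul_smul_comm, smul_mul_assoc, smul_smul, mul_assoc]
        _ = (L1⁻¹ * (L2 * L3)) • ((ρ ⟨(σ (q₁ * q₂))⁻¹ * σ q₁ * σ q₂, hχmem q₁ q₂⟩ *
            ρ ⟨(σ q₂)⁻¹ * ((σ q₁)⁻¹ * (σ (q₁*q₂) * x * (σ (q₁*q₂))⁻¹) * σ q₁) * σ q₂,
              memConj _ _ (memConj _ _ (memConj' _ x hx))⟩) *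
            ((M q₂)⁻¹ * ((M q₁)⁻¹ * M (q₁ * q₂)))) := by
            rw [h3]; simp only [mul_smul_comm, smul_mul_assoc, smul_smul, mul_assoc]
        _ = (L1⁻¹ * (L2 * (L3 *
            (α ((σ (q₁ * q₂))⁻¹ * σ q₁ * σ q₂)
              ((σ q₂)⁻¹ * ((σ q₁)⁻¹ * (σ (q₁*q₂) * x * (σ (q₁*q₂))⁻¹) * σ q₁) * σ q₂) : ℂ)))) •
            (ρ ((⟨(σ (q₁ * q₂))⁻¹ * σ q₁ * σ q₂, hχmem q₁ q₂⟩ : A) *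
              ⟨(σ q₂)⁻¹ * ((σ q₁)⁻¹ * (σ (q₁*q₂) * x * (σ (q₁*q₂))⁻¹) * σ q₁) * σ q₂,
                memConj _ _ (memConj _ _ (memConj' _ x hx))⟩) *
              ((M q₂)⁻¹ * ((M q₁)⁻¹ * M (q₁ * q₂)))) := by
            rw [hmul]; simp only [mul_smul_comm, smul_mul_assoc, smul_smul, mul_assoc]
        _ = _ := by rw [hAeq]; congr 1; simp only [mul_assoc]
    have eqL : ρ ⟨x, hx⟩ * (ρ ⟨(σ (q₁ * q₂))⁻¹ * σ q₁ * σ q₂, hχmem q₁ q₂⟩ *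
          (M q₂)⁻¹ * (M q₁)⁻¹ * M (q₁ * q₂))
        = (α x ((σ (q₁ * q₂))⁻¹ * σ q₁ * σ q₂) : ℂ) •
          (ρ ((⟨x, hx⟩ : A) * ⟨(σ (q₁ * q₂))⁻¹ * σ q₁ * σ q₂, hχmem q₁ q₂⟩) *
            (M q₂)⁻¹ * (M q₁)⁻¹ * M (q₁ * q₂)) := by
      have e : ρ ⟨x, hx⟩ * (ρ ⟨(σ (q₁ * q₂))⁻¹ * σ q₁ * σ q₂, hχmem q₁ q₂⟩ *
          (M q₂)⁻¹ * (M q₁)⁻¹ * M (q₁ * q₂))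
          = (ρ ⟨x, hx⟩ * ρ ⟨(σ (q₁ * q₂))⁻¹ * σ q₁ * σ q₂, hχmem q₁ q₂⟩) *
            (M q₂)⁻¹ * (M q₁)⁻¹ * M (q₁ * q₂) := by simp only [mul_assoc]
      rw [e, hmul]
      simp only [smul_mul_assoc]
    have hν : (L1⁻¹ * (L2 * (L3 *
        (α ((σ (q₁ * q₂))⁻¹ * σ q₁ * σ q₂)
          ((σ q₂)⁻¹ * ((σ q₁)⁻¹ * (σ (q₁*q₂) * x * (σ (q₁*q₂))⁻¹) * σ q₁) * σ q₂) : ℂ))))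
        = (α x ((σ (q₁ * q₂))⁻¹ * σ q₁ * σ q₂) : ℂ) := by
      have := nuEq α hcocycle (σ (q₁*q₂)) (σ q₁) (σ q₂) x
        (σ (q₁*q₂) * x * (σ (q₁*q₂))⁻¹)
        ((σ q₁)⁻¹ * (σ (q₁*q₂) * x * (σ (q₁*q₂))⁻¹) * σ q₁)
        ((σ q₂)⁻¹ * ((σ q₁)⁻¹ * (σ (q₁*q₂) * x * (σ (q₁*q₂))⁻¹) * σ q₁) * σ q₂)
        ((σ (q₁ * q₂))⁻¹ * σ q₁ * σ q₂) rfl rfl rfl rfl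
      rw [← hL1, ← hL2, ← hL3] at this
      linear_combination this
    rw [eqL, eqR, hν]
  obtain ⟨c0, hc0⟩ := schurAux hd ρ hirr
    (ρ ⟨(σ (q₁ * q₂))⁻¹ * σ q₁ * σ q₂, hχmem q₁ q₂⟩ *
      (M q₂)⁻¹ * (M q₁)⁻¹ * M (q₁ * q₂))
    (fun a => hcomm a.1 a.2)
  exact ⟨(((α (σ (q₁ * q₂)) ((σ (q₁ * q₂))⁻¹ * σ q₁ * σ q₂))⁻¹ * α (σ q₁) (σ q₂) : Circle) : ℂ)
    * c0, by rw [hc0, smul_smul]⟩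
end

section
/- In the setting above, define β(q₁,q₂) ∈ S¹ by β(q₁,q₂)·Id = τ(q₁,q₂)·ρ(χ(q₁,q₂))·M_{q₂}⁻¹M_{q₁}⁻¹M_{q₁q₂}. Then β is a normalized 2-cocycle on Q with values in S¹: β(q₁,q₂q₃)β(q₂,q₃) = β(q₁q₂,q₃)β(q₁,q₂) for all q₁,q₂,q₃ ∈ Q, and β(q₁,q₂)=1 whenever q₁=1 or q₂=1. -/
set_option maxHeartbeats 2000000

private lemma stepAux {d : ℕ} {c e f g : ℂ} {X Y Z : Matrix (Fin d) (Fin d) ℂ}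
    (h1 : c • X = e • Y) (h2 : f • Y = g • Z) : (f * c) • X = (e * g) • Z := by
  rw [mul_smul, h1, smul_comm, h2, smul_smul]

private lemma stepAux2 {d : ℕ} {c e c' e' : ℂ} {X Y : Matrix (Fin d) (Fin d) ℂ}
    (h1 : c • X = e • Y) (h2 : c' • X = e' • Y) : (c' * e) • Y = (c * e') • Y := by
  rw [mul_smul, ← h1, smul_smul, mul_comm, mul_smul, h2, smul_smul]

private lemma smulCancel {d : ℕ} (hd : 0 < d) {c c' : ℂ} {X : Matrix (Fin d) (Fin d) ℂ}
    (hX : X ∈ Matrix.unitaryGroup (Fin d) ℂ) (h : c • X = c' • X) : c = c' := by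
  have h2 : c • (X * star X) = c' • (X * star X) := by
    rw [← smul_mul_assoc, ← smul_mul_assoc, h]
  rw [Matrix.mem_unitaryGroup_iff.mp hX] at h2
  have h3 := congrFun (congrFun h2 ⟨0, hd⟩) ⟨0, hd⟩
  simpa [Matrix.one_apply] using h3

private lemma cancelAux {d : ℕ} (X Y : Matrix (Fin d) (Fin d) ℂ) (h : X * Y = 1)
    (Z : Matrix (Fin d) (Fin d) ℂ) : X * (Y * Z) = Z := by
  rw [← mul_assoc, h, one_mul]



/-- The scalar `β(q₁,q₂)` defined by
`β(q₁,q₂)·Id = τ(q₁,q₂)·ρ(χ(q₁,q₂))·M_{q₂}⁻¹M_{q₁}⁻¹M_{q₁q₂}`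
is a normalized 2-cocycle on `Q = G/A` with values in `S¹`. -/
theorem stmt12 {G : Type*} [Group G] [Finite G] (A : Subgroup G) [hA : A.Normal]
    (α : G → G → Circle)
    (hcocycle : ∀ g h k : G, α (g * h) k * α g h = α g (h * k) * α h k)
    (hnorm₁ : ∀ g : G, α g 1 = 1) (hnorm₂ : ∀ g : G, α 1 g = 1)
    {d : ℕ} (hd : 0 < d) (ρ : A → Matrix (Fin d) (Fin d) ℂ)
    (hunitary : ∀ a : A, ρ a ∈ Matrix.unitaryGroup (Fin d) ℂ)
    (h1 : ρ 1 = 1)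
    (hmul : ∀ a b : A, ρ a * ρ b = ((α a b : ℂ)) • ρ (a * b))
    (hirr : ∀ W : Submodule ℂ (Fin d → ℂ),
      (∀ a : A, W.map (Matrix.toLin' (ρ a)) ≤ W) → W = ⊥ ∨ W = ⊤)
    (σ : G ⧸ A → G)
    (hσ : ∀ q : G ⧸ A, QuotientGroup.mk (σ q) = q) (hσ1 : σ 1 = 1)
    (hχmem : ∀ q₁ q₂ : G ⧸ A, (σ (q₁ * q₂))⁻¹ * σ q₁ * σ q₂ ∈ A)
    (M : G ⧸ A → Matrix (Fin d) (Fin d) ℂ)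
    (hMunitary : ∀ q : G ⧸ A, M q ∈ Matrix.unitaryGroup (Fin d) ℂ)
    (hM1 : M 1 = 1)
    (hM : ∀ (q : G ⧸ A) (a : A),
      twistedAct A hA α (σ q) ρ a = (M q)⁻¹ * ρ a * M q)
    (β : G ⧸ A → G ⧸ A → Circle)
    (hβ : ∀ q₁ q₂ : G ⧸ A,
      ((β q₁ q₂ : ℂ)) • (1 : Matrix (Fin d) (Fin d) ℂ)
      = (((α (σ (q₁ * q₂)) ((σ (q₁ * q₂))⁻¹ * σ q₁ * σ q₂))⁻¹ * α (σ q₁) (σ q₂) : Circle) : ℂ) •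
        (ρ ⟨(σ (q₁ * q₂))⁻¹ * σ q₁ * σ q₂, hχmem q₁ q₂⟩ *
          (M q₂)⁻¹ * (M q₁)⁻¹ * M (q₁ * q₂))) :
    (∀ q₁ q₂ q₃ : G ⧸ A,
      β q₁ (q₂ * q₃) * β q₂ q₃ = β (q₁ * q₂) q₃ * β q₁ q₂) ∧
    (∀ q₁ q₂ : G ⧸ A, q₁ = 1 ∨ q₂ = 1 → β q₁ q₂ = 1) := by
  have hMr : ∀ q : G ⧸ A, M q * (M q)⁻¹ = 1 := by
    intro q
    rw [Matrix.inv_eq_right_inv (Matrix.mem_unitaryGroup_iff.mp (hMunitary q))]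
    exact Matrix.mem_unitaryGroup_iff.mp (hMunitary q)
  have hMl : ∀ q : G ⧸ A, (M q)⁻¹ * M q = 1 := by
    intro q
    rw [Matrix.inv_eq_right_inv (Matrix.mem_unitaryGroup_iff.mp (hMunitary q))]
    exact Matrix.mem_unitaryGroup_iff'.mp (hMunitary q)
  -- cleared form of hβ
  have hR : ∀ p q : G ⧸ A,
      ((β p q : ℂ) * ((α (σ (p * q)) ((σ (p * q))⁻¹ * σ p * σ q) : Circle) : ℂ)) • (M p * M q)
      = ((α (σ p) (σ q) : Circle) : ℂ) •
          (M (p * q) * ρ ⟨(σ (p * q))⁻¹ * σ p * σ q, hχmem p q⟩) := by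
    intro p q
    have h0 := hβ p q
    rw [Circle.coe_mul, Circle.coe_inv] at h0
    have hne : ((α (σ (p * q)) ((σ (p * q))⁻¹ * σ p * σ q) : Circle) : ℂ) ≠ 0 :=
      Circle.coe_ne_zero _
    have e1 : ((β p q : ℂ) • (1 : Matrix (Fin d) (Fin d) ℂ)) * ((M (p * q))⁻¹ * (M p * M q))
        = (((α (σ (p * q)) ((σ (p * q))⁻¹ * σ p * σ q) : Circle) : ℂ)⁻¹
            * ((α (σ p) (σ q) : Circle) : ℂ)) •
          (ρ ⟨(σ (p * q))⁻¹ * σ p * σ q, hχmem p q⟩ * (M q)⁻¹ * (M p)⁻¹ * M (p * q))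
          * ((M (p * q))⁻¹ * (M p * M q)) := by rw [h0]
    rw [smul_mul_assoc, smul_mul_assoc, one_mul] at e1
    have e2 : ρ ⟨(σ (p * q))⁻¹ * σ p * σ q, hχmem p q⟩ * (M q)⁻¹ * (M p)⁻¹ * M (p * q)
        * ((M (p * q))⁻¹ * (M p * M q)) = ρ ⟨(σ (p * q))⁻¹ * σ p * σ q, hχmem p q⟩ := by
      simp only [mul_assoc]
      rw [cancelAux _ _ (hMr (p * q)), cancelAux _ _ (hMl p), hMl q, mul_one]
    rw [e2] at e1
    have e3 : M (p * q) * ((β p q : ℂ) • ((M (p * q))⁻¹ * (M p * M q)))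
        = M (p * q) * ((((α (σ (p * q)) ((σ (p * q))⁻¹ * σ p * σ q) : Circle) : ℂ)⁻¹
            * ((α (σ p) (σ q) : Circle) : ℂ)) •
            ρ ⟨(σ (p * q))⁻¹ * σ p * σ q, hχmem p q⟩) := by rw [e1]
    rw [mul_smul_comm, mul_smul_comm, ← mul_assoc, hMr, one_mul] at e3
    have e4 := congrArg (fun z => ((α (σ (p * q)) ((σ (p * q))⁻¹ * σ p * σ q) : Circle) : ℂ) • z) e3
    simp only [smul_smul] at e4
    rw [show ((α (σ (p * q)) ((σ (p * q))⁻¹ * σ p * σ q) : Circle) : ℂ) *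
        (((α (σ (p * q)) ((σ (p * q))⁻¹ * σ p * σ q) : Circle) : ℂ)⁻¹
          * ((α (σ p) (σ q) : Circle) : ℂ)) = ((α (σ p) (σ q) : Circle) : ℂ) by
      field_simp] at e4
    rw [mul_comm ((β p q : ℂ))]
    exact e4
  have hS : ∀ (q : G ⧸ A) (a : A),
      ((α (σ q) ((σ q)⁻¹ * (a : G)) : Circle) : ℂ) • (ρ a * M q)
      = ((α ((σ q)⁻¹ * (a : G)) (σ q) : Circle) : ℂ) •
          (M q * ρ ⟨(σ q)⁻¹ * (a : G) * σ q,
            by simpa using hA.conj_mem (a : G) a.2 (σ q)⁻¹⟩) := by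
    intro q a
    have h0 := hM q a
    simp only [twistedAct] at h0
    rw [Circle.coe_inv] at h0
    have hne : ((α (σ q) ((σ q)⁻¹ * (a : G)) : Circle) : ℂ) ≠ 0 := Circle.coe_ne_zero _
    have e1 : M q * ((((α ((σ q)⁻¹ * (a : G)) (σ q) : Circle) : ℂ)
          * ((α (σ q) ((σ q)⁻¹ * (a : G)) : Circle) : ℂ)⁻¹) •
          ρ ⟨(σ q)⁻¹ * (a : G) * σ q,
            by simpa using hA.conj_mem (a : G) a.2 (σ q)⁻¹⟩)
        = M q * ((M q)⁻¹ * ρ a * M q) := by rw [h0]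
    rw [mul_smul_comm, ← mul_assoc, ← mul_assoc, hMr, one_mul] at e1
    have e2 := congrArg (fun z => ((α (σ q) ((σ q)⁻¹ * (a : G)) : Circle) : ℂ) • z) e1
    simp only [smul_smul] at e2
    rw [show ((α (σ q) ((σ q)⁻¹ * (a : G)) : Circle) : ℂ)
        * (((α ((σ q)⁻¹ * (a : G)) (σ q) : Circle) : ℂ)
          * ((α (σ q) ((σ q)⁻¹ * (a : G)) : Circle) : ℂ)⁻¹)
        = ((α ((σ q)⁻¹ * (a : G)) (σ q) : Circle) : ℂ) by field_simp] at e2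
    exact e2.symm
  constructor
  · intro q₁ q₂ q₃
    have hR' : ∀ (p q r : G ⧸ A) (h : p * q = r) (hm : (σ r)⁻¹ * σ p * σ q ∈ A),
        ((β p q : ℂ) * ((α (σ r) ((σ r)⁻¹ * σ p * σ q) : Circle) : ℂ)) • (M p * M q)
        = ((α (σ p) (σ q) : Circle) : ℂ) • (M r * ρ ⟨(σ r)⁻¹ * σ p * σ q, hm⟩) := by
      intro p q r h hm
      subst h
      exact hR p q
    have hcC : ∀ g h k : G, ((α (g * h) k : Circle) : ℂ) * ((α g h : Circle) : ℂ)
        = ((α g (h * k) : Circle) : ℂ) * ((α h k : Circle) : ℂ) := by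
      intro g h k
      exact_mod_cast congrArg (fun z : Circle => (z : ℂ)) (hcocycle g h k)
    have hymem : (σ q₃)⁻¹ * ((σ (q₁ * q₂))⁻¹ * σ q₁ * σ q₂) * σ q₃ ∈ A := by
      simpa using hA.conj_mem _ (hχmem q₁ q₂) (σ q₃)⁻¹
    have hx1mem : (σ (q₁ * q₂ * q₃))⁻¹ * σ q₁ * σ (q₂ * q₃) ∈ A := by
      rw [mul_assoc q₁ q₂ q₃]
      exact hχmem q₁ (q₂ * q₃)
    -- the two associativity chains
    have t1 : (((β q₁ q₂ : Circle) : ℂ) * ((α (σ (q₁ * q₂)) ((σ (q₁ * q₂))⁻¹ * σ q₁ * σ q₂) : Circle) : ℂ)) • (M q₁ * M q₂ * M q₃)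
        = ((α (σ q₁) (σ q₂) : Circle) : ℂ) • (M (q₁ * q₂) * ρ (⟨(σ (q₁ * q₂))⁻¹ * σ q₁ * σ q₂, hχmem q₁ q₂⟩ : A) * M q₃) := by
      have h := congrArg (fun Z => Z * M q₃) (hR' q₁ q₂ (q₁ * q₂) rfl (hχmem q₁ q₂))
      simpa only [smul_mul_assoc] using h
    have t2 : ((α (σ q₃) ((σ q₃)⁻¹ * ((σ (q₁ * q₂))⁻¹ * σ q₁ * σ q₂)) : Circle) : ℂ) • (M (q₁ * q₂) * ρ (⟨(σ (q₁ * q₂))⁻¹ * σ q₁ * σ q₂, hχmem q₁ q₂⟩ : A) * M q₃)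
        = ((α ((σ q₃)⁻¹ * ((σ (q₁ * q₂))⁻¹ * σ q₁ * σ q₂)) (σ q₃) : Circle) : ℂ) • (M (q₁ * q₂) * M q₃ * ρ (⟨(σ q₃)⁻¹ * ((σ (q₁ * q₂))⁻¹ * σ q₁ * σ q₂) * σ q₃, hymem⟩ : A)) := by
      have h := congrArg (fun Z => M (q₁ * q₂) * Z) (hS q₃ (⟨(σ (q₁ * q₂))⁻¹ * σ q₁ * σ q₂, hχmem q₁ q₂⟩ : A))
      simp only [mul_smul_comm] at h
      rw [← mul_assoc (M (q₁ * q₂)) (ρ (⟨(σ (q₁ * q₂))⁻¹ * σ q₁ * σ q₂, hχmem q₁ q₂⟩ : A)), ← mul_assoc (M (q₁ * q₂)) (M q₃)] at h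
      exact h
    have t3 : (((β (q₁ * q₂) q₃ : Circle) : ℂ) * ((α (σ (q₁ * q₂ * q₃)) ((σ (q₁ * q₂ * q₃))⁻¹ * σ (q₁ * q₂) * σ q₃) : Circle) : ℂ)) • (M (q₁ * q₂) * M q₃ * ρ (⟨(σ q₃)⁻¹ * ((σ (q₁ * q₂))⁻¹ * σ q₁ * σ q₂) * σ q₃, hymem⟩ : A))
        = ((α (σ (q₁ * q₂)) (σ q₃) : Circle) : ℂ) • (M (q₁ * q₂ * q₃) * ρ (⟨(σ (q₁ * q₂ * q₃))⁻¹ * σ (q₁ * q₂) * σ q₃, hχmem (q₁ * q₂) q₃⟩ : A) * ρ (⟨(σ q₃)⁻¹ * ((σ (q₁ * q₂))⁻¹ * σ q₁ * σ q₂) * σ q₃, hymem⟩ : A)) := by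
      have h := congrArg (fun Z => Z * ρ (⟨(σ q₃)⁻¹ * ((σ (q₁ * q₂))⁻¹ * σ q₁ * σ q₂) * σ q₃, hymem⟩ : A)) (hR' (q₁ * q₂) q₃ (q₁ * q₂ * q₃) rfl (hχmem (q₁ * q₂) q₃))
      simpa only [smul_mul_assoc] using h
    have t4 : (1 : ℂ) • (M (q₁ * q₂ * q₃) * ρ (⟨(σ (q₁ * q₂ * q₃))⁻¹ * σ (q₁ * q₂) * σ q₃, hχmem (q₁ * q₂) q₃⟩ : A) * ρ (⟨(σ q₃)⁻¹ * ((σ (q₁ * q₂))⁻¹ * σ q₁ * σ q₂) * σ q₃, hymem⟩ : A))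
        = ((α ((σ (q₁ * q₂ * q₃))⁻¹ * σ (q₁ * q₂) * σ q₃) ((σ q₃)⁻¹ * ((σ (q₁ * q₂))⁻¹ * σ q₁ * σ q₂) * σ q₃) : Circle) : ℂ) • (M (q₁ * q₂ * q₃) * ρ ((⟨(σ (q₁ * q₂ * q₃))⁻¹ * σ (q₁ * q₂) * σ q₃, hχmem (q₁ * q₂) q₃⟩ : A) * (⟨(σ q₃)⁻¹ * ((σ (q₁ * q₂))⁻¹ * σ q₁ * σ q₂) * σ q₃, hymem⟩ : A))) := by
      rw [one_smul, mul_assoc (M (q₁ * q₂ * q₃)) (ρ (⟨(σ (q₁ * q₂ * q₃))⁻¹ * σ (q₁ * q₂) * σ q₃, hχmem (q₁ * q₂) q₃⟩ : A)) (ρ (⟨(σ q₃)⁻¹ * ((σ (q₁ * q₂))⁻¹ * σ q₁ * σ q₂) * σ q₃, hymem⟩ : A)), hmul, mul_smul_comm]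
    have r1 : (((β q₂ q₃ : Circle) : ℂ) * ((α (σ (q₂ * q₃)) ((σ (q₂ * q₃))⁻¹ * σ q₂ * σ q₃) : Circle) : ℂ)) • (M q₁ * (M q₂ * M q₃))
        = ((α (σ q₂) (σ q₃) : Circle) : ℂ) • (M q₁ * M (q₂ * q₃) * ρ (⟨(σ (q₂ * q₃))⁻¹ * σ q₂ * σ q₃, hχmem q₂ q₃⟩ : A)) := by
      have h := congrArg (fun Z => M q₁ * Z) (hR' q₂ q₃ (q₂ * q₃) rfl (hχmem q₂ q₃))
      simp only [mul_smul_comm] at h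
      rw [← mul_assoc (M q₁) (M (q₂ * q₃))] at h
      exact h
    have r2 : (((β q₁ (q₂ * q₃) : Circle) : ℂ) * ((α (σ (q₁ * q₂ * q₃)) ((σ (q₁ * q₂ * q₃))⁻¹ * σ q₁ * σ (q₂ * q₃)) : Circle) : ℂ)) • (M q₁ * M (q₂ * q₃) * ρ (⟨(σ (q₂ * q₃))⁻¹ * σ q₂ * σ q₃, hχmem q₂ q₃⟩ : A))
        = ((α (σ q₁) (σ (q₂ * q₃)) : Circle) : ℂ) • (M (q₁ * q₂ * q₃) * ρ (⟨(σ (q₁ * q₂ * q₃))⁻¹ * σ q₁ * σ (q₂ * q₃), hx1mem⟩ : A) * ρ (⟨(σ (q₂ * q₃))⁻¹ * σ q₂ * σ q₃, hχmem q₂ q₃⟩ : A)) := by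
      have h := congrArg (fun Z => Z * ρ (⟨(σ (q₂ * q₃))⁻¹ * σ q₂ * σ q₃, hχmem q₂ q₃⟩ : A)) (hR' q₁ (q₂ * q₃) (q₁ * q₂ * q₃) (mul_assoc q₁ q₂ q₃).symm hx1mem)
      simpa only [smul_mul_assoc] using h
    have r3 : (1 : ℂ) • (M (q₁ * q₂ * q₃) * ρ (⟨(σ (q₁ * q₂ * q₃))⁻¹ * σ q₁ * σ (q₂ * q₃), hx1mem⟩ : A) * ρ (⟨(σ (q₂ * q₃))⁻¹ * σ q₂ * σ q₃, hχmem q₂ q₃⟩ : A))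
        = ((α ((σ (q₁ * q₂ * q₃))⁻¹ * σ q₁ * σ (q₂ * q₃)) ((σ (q₂ * q₃))⁻¹ * σ q₂ * σ q₃) : Circle) : ℂ) • (M (q₁ * q₂ * q₃) * ρ ((⟨(σ (q₁ * q₂ * q₃))⁻¹ * σ q₁ * σ (q₂ * q₃), hx1mem⟩ : A) * (⟨(σ (q₂ * q₃))⁻¹ * σ q₂ * σ q₃, hχmem q₂ q₃⟩ : A))) := by
      rw [one_smul, mul_assoc (M (q₁ * q₂ * q₃)) (ρ (⟨(σ (q₁ * q₂ * q₃))⁻¹ * σ q₁ * σ (q₂ * q₃), hx1mem⟩ : A)) (ρ (⟨(σ (q₂ * q₃))⁻¹ * σ q₂ * σ q₃, hχmem q₂ q₃⟩ : A)), hmul, mul_smul_comm]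
    have u1 := stepAux t1 t2
    have u2 := stepAux u1 t3
    have u3 := stepAux u2 t4
    have v1 := stepAux r1 r2
    have v2 := stepAux v1 r3
    have hxy : (⟨(σ (q₁ * q₂ * q₃))⁻¹ * σ q₁ * σ (q₂ * q₃), hx1mem⟩ : A) * (⟨(σ (q₂ * q₃))⁻¹ * σ q₂ * σ q₃, hχmem q₂ q₃⟩ : A) = (⟨(σ (q₁ * q₂ * q₃))⁻¹ * σ (q₁ * q₂) * σ q₃, hχmem (q₁ * q₂) q₃⟩ : A) * (⟨(σ q₃)⁻¹ * ((σ (q₁ * q₂))⁻¹ * σ q₁ * σ q₂) * σ q₃, hymem⟩ : A) := by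
      refine Subtype.ext ?_
      show ((σ (q₁ * q₂ * q₃))⁻¹ * σ q₁ * σ (q₂ * q₃)) * ((σ (q₂ * q₃))⁻¹ * σ q₂ * σ q₃) = ((σ (q₁ * q₂ * q₃))⁻¹ * σ (q₁ * q₂) * σ q₃) * ((σ q₃)⁻¹ * ((σ (q₁ * q₂))⁻¹ * σ q₁ * σ q₂) * σ q₃)
      group
    rw [← mul_assoc (M q₁) (M q₂) (M q₃), hxy] at v2
    have hY4 : M (q₁ * q₂ * q₃) * ρ ((⟨(σ (q₁ * q₂ * q₃))⁻¹ * σ (q₁ * q₂) * σ q₃, hχmem (q₁ * q₂) q₃⟩ : A) * (⟨(σ q₃)⁻¹ * ((σ (q₁ * q₂))⁻¹ * σ q₁ * σ q₂) * σ q₃, hymem⟩ : A)) ∈ Matrix.unitaryGroup (Fin d) ℂ :=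
      mul_mem (hMunitary _) (hunitary _)
    have hsc := smulCancel hd hY4 (stepAux2 u3 v2)
    -- cocycle instances
    have I1 := hcC (σ (q₁ * q₂)) ((σ (q₁ * q₂))⁻¹ * σ q₁ * σ q₂) (σ q₃)
    rw [show (σ (q₁ * q₂)) * ((σ (q₁ * q₂))⁻¹ * σ q₁ * σ q₂) = σ q₁ * σ q₂ by group] at I1
    have I2 := hcC (σ q₃) ((σ q₃)⁻¹ * ((σ (q₁ * q₂))⁻¹ * σ q₁ * σ q₂)) (σ q₃)
    rw [show (σ q₃) * ((σ q₃)⁻¹ * ((σ (q₁ * q₂))⁻¹ * σ q₁ * σ q₂)) = (σ (q₁ * q₂))⁻¹ * σ q₁ * σ q₂ by group] at I2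
    have I3 := hcC (σ (q₁ * q₂)) (σ q₃) ((σ q₃)⁻¹ * ((σ (q₁ * q₂))⁻¹ * σ q₁ * σ q₂) * σ q₃)
    rw [show (σ q₃) * ((σ q₃)⁻¹ * ((σ (q₁ * q₂))⁻¹ * σ q₁ * σ q₂) * σ q₃) = ((σ (q₁ * q₂))⁻¹ * σ q₁ * σ q₂) * σ q₃ by group] at I3
    have I4 := hcC (σ (q₁ * q₂ * q₃)) ((σ (q₁ * q₂ * q₃))⁻¹ * σ (q₁ * q₂) * σ q₃) ((σ q₃)⁻¹ * ((σ (q₁ * q₂))⁻¹ * σ q₁ * σ q₂) * σ q₃)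
    rw [show (σ (q₁ * q₂ * q₃)) * ((σ (q₁ * q₂ * q₃))⁻¹ * σ (q₁ * q₂) * σ q₃) = σ (q₁ * q₂) * σ q₃ by group] at I4
    have I5 := hcC (σ q₁) (σ q₂) (σ q₃)
    have I6 := hcC (σ q₁) (σ (q₂ * q₃)) ((σ (q₂ * q₃))⁻¹ * σ q₂ * σ q₃)
    rw [show (σ (q₂ * q₃)) * ((σ (q₂ * q₃))⁻¹ * σ q₂ * σ q₃) = σ q₂ * σ q₃ by group] at I6
    have I7 := hcC (σ (q₁ * q₂ * q₃)) ((σ (q₁ * q₂ * q₃))⁻¹ * σ q₁ * σ (q₂ * q₃)) ((σ (q₂ * q₃))⁻¹ * σ q₂ * σ q₃)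
    rw [show (σ (q₁ * q₂ * q₃)) * ((σ (q₁ * q₂ * q₃))⁻¹ * σ q₁ * σ (q₂ * q₃)) = σ q₁ * σ (q₂ * q₃) by group,
      show ((σ (q₁ * q₂ * q₃))⁻¹ * σ q₁ * σ (q₂ * q₃)) * ((σ (q₂ * q₃))⁻¹ * σ q₂ * σ q₃) = ((σ (q₁ * q₂ * q₃))⁻¹ * σ (q₁ * q₂) * σ q₃) * ((σ q₃)⁻¹ * ((σ (q₁ * q₂))⁻¹ * σ q₁ * σ q₂) * σ q₃) by group] at I7
    -- nonzero facts
    have nzA : ((α (σ q₁) (σ q₂) : Circle) : ℂ) ≠ 0 := Circle.coe_ne_zero _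
    have nzB : ((α (σ q₁ * σ q₂) (σ q₃) : Circle) : ℂ) ≠ 0 := Circle.coe_ne_zero _
    have nzG : ((α ((σ q₃)⁻¹ * ((σ (q₁ * q₂))⁻¹ * σ q₁ * σ q₂)) (σ q₃) : Circle) : ℂ) ≠ 0 := Circle.coe_ne_zero _
    have nzK : ((α (σ (q₁ * q₂)) (σ q₃) : Circle) : ℂ) ≠ 0 := Circle.coe_ne_zero _
    have nzN : ((α (σ (q₁ * q₂ * q₃)) (((σ (q₁ * q₂ * q₃))⁻¹ * σ (q₁ * q₂) * σ q₃) * ((σ q₃)⁻¹ * ((σ (q₁ * q₂))⁻¹ * σ q₁ * σ q₂) * σ q₃)) : Circle) : ℂ) ≠ 0 := Circle.coe_ne_zero _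
    have nzP : ((α ((σ (q₁ * q₂ * q₃))⁻¹ * σ (q₁ * q₂) * σ q₃) ((σ q₃)⁻¹ * ((σ (q₁ * q₂))⁻¹ * σ q₁ * σ q₂) * σ q₃) : Circle) : ℂ) ≠ 0 := Circle.coe_ne_zero _
    have nzR : ((α (σ (q₂ * q₃)) ((σ (q₂ * q₃))⁻¹ * σ q₂ * σ q₃) : Circle) : ℂ) ≠ 0 := Circle.coe_ne_zero _
    have nzV : ((α (σ (q₁ * q₂ * q₃)) ((σ (q₁ * q₂ * q₃))⁻¹ * σ q₁ * σ (q₂ * q₃)) : Circle) : ℂ) ≠ 0 := Circle.coe_ne_zero _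
    refine Circle.ext ?_
    rw [Circle.coe_mul, Circle.coe_mul]
    set eA := ((α (σ q₁) (σ q₂) : Circle) : ℂ) with heA
    set eB := ((α (σ q₁ * σ q₂) (σ q₃) : Circle) : ℂ) with heB
    set eC := ((α (σ (q₁ * q₂)) ((σ (q₁ * q₂))⁻¹ * σ q₁ * σ q₂) : Circle) : ℂ) with heC
    set eD := ((α (σ (q₁ * q₂)) (((σ (q₁ * q₂))⁻¹ * σ q₁ * σ q₂) * σ q₃) : Circle) : ℂ) with heD
    set eE := ((α ((σ (q₁ * q₂))⁻¹ * σ q₁ * σ q₂) (σ q₃) : Circle) : ℂ) with heE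
    set eF := ((α (σ q₃) ((σ q₃)⁻¹ * ((σ (q₁ * q₂))⁻¹ * σ q₁ * σ q₂) * σ q₃) : Circle) : ℂ) with heF
    set eG := ((α ((σ q₃)⁻¹ * ((σ (q₁ * q₂))⁻¹ * σ q₁ * σ q₂)) (σ q₃) : Circle) : ℂ) with heG
    set eH := ((α (σ q₃) ((σ q₃)⁻¹ * ((σ (q₁ * q₂))⁻¹ * σ q₁ * σ q₂)) : Circle) : ℂ) with heH
    set eJ := ((α (σ (q₁ * q₂) * σ q₃) ((σ q₃)⁻¹ * ((σ (q₁ * q₂))⁻¹ * σ q₁ * σ q₂) * σ q₃) : Circle) : ℂ) with heJ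
    set eK := ((α (σ (q₁ * q₂)) (σ q₃) : Circle) : ℂ) with heK
    set eL := ((α (σ (q₁ * q₂ * q₃)) ((σ (q₁ * q₂ * q₃))⁻¹ * σ (q₁ * q₂) * σ q₃) : Circle) : ℂ) with heL
    set eN := ((α (σ (q₁ * q₂ * q₃)) (((σ (q₁ * q₂ * q₃))⁻¹ * σ (q₁ * q₂) * σ q₃) * ((σ q₃)⁻¹ * ((σ (q₁ * q₂))⁻¹ * σ q₁ * σ q₂) * σ q₃)) : Circle) : ℂ) with heN
    set eP := ((α ((σ (q₁ * q₂ * q₃))⁻¹ * σ (q₁ * q₂) * σ q₃) ((σ q₃)⁻¹ * ((σ (q₁ * q₂))⁻¹ * σ q₁ * σ q₂) * σ q₃) : Circle) : ℂ) with heP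
    set eQ := ((α (σ q₁) (σ q₂ * σ q₃) : Circle) : ℂ) with heQ
    set eR := ((α (σ (q₂ * q₃)) ((σ (q₂ * q₃))⁻¹ * σ q₂ * σ q₃) : Circle) : ℂ) with heR
    set eS := ((α (σ q₂) (σ q₃) : Circle) : ℂ) with heS
    set eT := ((α (σ q₁ * σ (q₂ * q₃)) ((σ (q₂ * q₃))⁻¹ * σ q₂ * σ q₃) : Circle) : ℂ) with heT
    set eU := ((α (σ q₁) (σ (q₂ * q₃)) : Circle) : ℂ) with heU
    set eV := ((α (σ (q₁ * q₂ * q₃)) ((σ (q₁ * q₂ * q₃))⁻¹ * σ q₁ * σ (q₂ * q₃)) : Circle) : ℂ) with heV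
    set eW := ((α ((σ (q₁ * q₂ * q₃))⁻¹ * σ q₁ * σ (q₂ * q₃)) ((σ (q₂ * q₃))⁻¹ * σ q₂ * σ q₃) : Circle) : ℂ) with heW
    set bb12 := ((β q₁ q₂ : Circle) : ℂ) with hbb12
    set bb3 := ((β (q₁ * q₂) q₃ : Circle) : ℂ) with hbb3
    set bb23 := ((β q₂ q₃ : Circle) : ℂ) with hbb23
    set bb1 := ((β q₁ (q₂ * q₃) : Circle) : ℂ) with hbb1
    have E1 : eB * eC * eH * eL = eK * eG * eN * eP := by
      linear_combination eH * eL * I1 + eD * eL * I2 - eG * eL * I3 + eK * eG * I4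
    have E2 : eA * eB * eR * eV = eS * eU * eN * eW := by
      linear_combination eR * eV * I5 - eS * eV * I6 + eS * eU * I7
    have E3 : eA * eG * eK * eP * eR * eV = eS * eU * eW * eC * eH * eL := by
      refine mul_right_cancel₀ (mul_ne_zero nzB nzN) ?_
      linear_combination eG * eK * eP * eN * E2 - eS * eU * eW * eN * E1
    refine mul_right_cancel₀ (mul_ne_zero (mul_ne_zero (mul_ne_zero (mul_ne_zero (mul_ne_zero nzA nzG) nzK) nzP) nzR) nzV) ?_
    linear_combination hsc - bb3 * bb12 * E3
  · -- normalization
    rintro q₁ q₂ (rfl | rfl)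
    · -- q₁ = 1
      have h0 := hβ 1 q₂
      simp only [one_mul, hσ1] at h0
      have key : ∀ hm : (σ q₂)⁻¹ * 1 * σ q₂ ∈ A, (⟨(σ q₂)⁻¹ * 1 * σ q₂, hm⟩ : A) = 1 :=
        fun hm => Subtype.ext (by simp)
      rw [key] at h0
      rw [show (σ q₂)⁻¹ * 1 * σ q₂ = (1 : G) by group] at h0
      rw [hnorm₁, hnorm₂] at h0
      simp only [h1, hM1, inv_one, one_mul, inv_one, Circle.coe_one, one_smul,
        mul_one] at h0
      rw [hMl q₂] at h0
      have hc : (β 1 q₂ : ℂ) = 1 :=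
        smulCancel hd (one_mem _) (h0.trans (one_smul ℂ (1 : Matrix (Fin d) (Fin d) ℂ)).symm)
      exact Circle.coe_eq_one.mp hc
    · -- q₂ = 1
      have h0 := hβ q₁ 1
      simp only [mul_one, hσ1] at h0
      have key : ∀ hm : (σ q₁)⁻¹ * σ q₁ ∈ A, (⟨(σ q₁)⁻¹ * σ q₁, hm⟩ : A) = 1 :=
        fun hm => Subtype.ext (by simp)
      rw [key] at h0
      rw [show (σ q₁)⁻¹ * σ q₁ = (1 : G) by group] at h0
      rw [hnorm₁] at h0
      simp only [h1, hM1, inv_one, one_mul, inv_one, Circle.coe_one, one_smul,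
        mul_one] at h0
      rw [hMl q₁] at h0
      have hc : (β q₁ 1 : ℂ) = 1 :=
        smulCancel hd (one_mem _) (h0.trans (one_smul ℂ (1 : Matrix (Fin d) (Fin d) ℂ)).symm)
      exact Circle.coe_eq_one.mp hc
end

section
/- Let n ≥ 2 be even, ε a primitive n-th root of unity in ℂ, and D_{2n} = ⟨a,b | aⁿ = b² = 1, bab = a⁻¹⟩. Define α: D_{2n} × D_{2n} → S¹ by α(aʲ, aᵏbˡ) = 1 and α(aʲb, aᵏbˡ) = εᵏ for 0 ≤ j,k ≤ n−1, l ∈ {0,1}. Then α is a normalized 2-cocycle on D_{2n} with values in S¹. -/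
/-! Since `εⁿ = 1`, the map `a ↦ ε ^ a.val` is multiplicative on `ZMod n`, so in each of the
eight rotation/reflection cases for `g, h, k` the cocycle identity reduces to an identity
between exponents in `ZMod n`. -/

/-- The 2-cocycle on the dihedral group `D_{2n}` determined by
`α(aʲ, aᵏbˡ) = 1` and `α(aʲb, aᵏbˡ) = εᵏ` (in Mathlib's `DihedralGroup n`,
`a = r 1`, `b = sr 0`, so `aᵏ = r k` and `aᵏb = sr (-k)`). -/
def dihedralCocycle (n : ℕ) [NeZero n] (ε : ℂ) :
    DihedralGroup n → DihedralGroup n → ℂ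
  | DihedralGroup.r _, _ => 1
  | DihedralGroup.sr _, DihedralGroup.r k => ε ^ k.val
  | DihedralGroup.sr _, DihedralGroup.sr m => ε ^ (-m : ZMod n).val

lemma pow_zmod_val_add {M : Type*} [Monoid M] {n : ℕ} [NeZero n] {x : M} (hx : x ^ n = 1)
    (a b : ZMod n) : x ^ (a + b).val = x ^ a.val * x ^ b.val := by
  rw [ZMod.val_add, ← pow_eq_pow_mod _ hx, pow_add]

section

open DihedralGroup

variable {n : ℕ} [NeZero n] {ε : ℂ}

theorem norm_dihedralCocycle (hε : ‖ε‖ = 1) (g h : DihedralGroup n) :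
    ‖dihedralCocycle n ε g h‖ = 1 := by
  rcases g with _ | _ <;> rcases h with _ | _ <;> simp [dihedralCocycle, hε]

theorem dihedralCocycle_one_left (g : DihedralGroup n) : dihedralCocycle n ε 1 g = 1 := by
  rw [one_def, dihedralCocycle]

theorem dihedralCocycle_one_right (g : DihedralGroup n) : dihedralCocycle n ε g 1 = 1 := by
  rcases g with _ | _ <;> simp [dihedralCocycle, one_def, -r_zero]

theorem dihedralCocycle_mul_mul (hε : ε ^ n = 1) (g h k : DihedralGroup n) :
    dihedralCocycle n ε (g * h) k * dihedralCocycle n ε g h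
      = dihedralCocycle n ε g (h * k) * dihedralCocycle n ε h k := by
  have hadd := pow_zmod_val_add hε
  rcases g with i | i <;> rcases h with j | j <;> rcases k with k | k <;>
    simp only [dihedralCocycle, r_mul_r, r_mul_sr, sr_mul_r, sr_mul_sr, one_mul, mul_one]
  case sr.r.r => rw [hadd, mul_comm]
  case sr.r.sr => rw [show -(k - j) = j + -k by ring, hadd, mul_comm]
  case sr.sr.r => rw [show -j = -(j + k) + k by ring, hadd]
  case sr.sr.sr => rw [show -j = (k - j) + -k by ring, hadd]

end

theorem stmt14_general (n : ℕ) [NeZero n]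
    (ε : ℂ) (hε : IsPrimitiveRoot ε n) :
    (∀ g h : DihedralGroup n, ‖dihedralCocycle n ε g h‖ = 1) ∧
    (∀ g h k : DihedralGroup n,
      dihedralCocycle n ε (g * h) k * dihedralCocycle n ε g h
      = dihedralCocycle n ε g (h * k) * dihedralCocycle n ε h k) ∧
    (∀ g : DihedralGroup n,
      dihedralCocycle n ε g 1 = 1 ∧ dihedralCocycle n ε 1 g = 1) :=
  ⟨norm_dihedralCocycle (Complex.norm_eq_one_of_pow_eq_one hε.pow_eq_one (NeZero.ne n)),
    dihedralCocycle_mul_mul hε.pow_eq_one,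
    fun g => ⟨dihedralCocycle_one_right g, dihedralCocycle_one_left g⟩⟩

/-- For `n ≥ 2` even and `ε` a primitive `n`-th root of unity, the function
`α(aʲ, aᵏbˡ) = 1`, `α(aʲb, aᵏbˡ) = εᵏ` is a normalized 2-cocycle on `D_{2n}`
with values in `S¹`. -/
theorem stmt14 (n : ℕ) [NeZero n] (hn2 : 2 ≤ n) (hn : Even n)
    (ε : ℂ) (hε : IsPrimitiveRoot ε n) :
    (∀ g h : DihedralGroup n, ‖dihedralCocycle n ε g h‖ = 1) ∧
    (∀ g h k : DihedralGroup n,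
      dihedralCocycle n ε (g * h) k * dihedralCocycle n ε g h
      = dihedralCocycle n ε g (h * k) * dihedralCocycle n ε h k) ∧
    (∀ g : DihedralGroup n,
      dihedralCocycle n ε g 1 = 1 ∧ dihedralCocycle n ε 1 g = 1) :=
  stmt14_general n ε hε
end

section
/- With n ≥ 2 even, ε a primitive n-th root of unity, and α the 2-cocycle on D_{2n} defined by α(aʲ, aᵏbˡ) = 1 and α(aʲb, aᵏbˡ) = εᵏ: for each i ∈ {1,…,n/2} the map τ_i: D_{2n} → GL₂(ℂ), τ_i(aᵏbˡ) = A_iᵏ B_iˡ where A_i = diag(εⁱ, ε^{1−i}) and B_i = [[0,1],[1,0]], is an α-representation of D_{2n}, i.e., τ_i(g)τ_i(h) = α(g,h)τ_i(gh) for all g,h ∈ D_{2n} and τ_i(1) = Id. -/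
/-- The projective representation `τ_i` of `D_{2n}`: `τ_i(aᵏbˡ) = A_iᵏ B_iˡ`,
where `A_i = diag(εⁱ, ε^{1-i})` and `B_i = [[0,1],[1,0]]`. -/
noncomputable def dihedralRep (n : ℕ) [NeZero n] (ε : ℂ) (i : ℕ) :
    DihedralGroup n → Matrix (Fin 2) (Fin 2) ℂ
  | DihedralGroup.r k =>
      (Matrix.diagonal ![ε ^ (i : ℤ), ε ^ (1 - (i : ℤ))]) ^ k.val
  | DihedralGroup.sr m =>
      (Matrix.diagonal ![ε ^ (i : ℤ), ε ^ (1 - (i : ℤ))]) ^ (-m : ZMod n).val *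
        !![0, 1; 1, 0]

/-- Each `τ_i`, `1 ≤ i ≤ n/2`, is an `α`-representation of `D_{2n}`:
`τ_i(g)τ_i(h) = α(g,h)·τ_i(gh)` and `τ_i(1) = Id`. -/
theorem stmt15 (n : ℕ) [NeZero n] (hn2 : 2 ≤ n) (hn : Even n)
    (ε : ℂ) (hε : IsPrimitiveRoot ε n)
    (i : ℕ) (hi1 : 1 ≤ i) (hi2 : i ≤ n / 2) :
    dihedralRep n ε i 1 = 1 ∧
    (∀ g h : DihedralGroup n,
      dihedralRep n ε i g * dihedralRep n ε i h
      = dihedralCocycle n ε g h • dihedralRep n ε i (g * h)) := by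
  have hε0 : ε ≠ 0 := hε.ne_zero (NeZero.ne n)
  have hεn : ε ^ n = 1 := hε.pow_eq_one
  have hper : ∀ x k : ℤ, ε ^ (x + (n:ℤ) * k) = ε ^ x := by
    intro x k
    rw [zpow_add₀ hε0, zpow_mul, zpow_natCast, hεn, one_zpow, mul_one]
  set D : Matrix (Fin 2) (Fin 2) ℂ :=
    Matrix.diagonal ![ε ^ (i : ℤ), ε ^ (1 - (i : ℤ))] with hD
  set E : Matrix (Fin 2) (Fin 2) ℂ :=
    Matrix.diagonal ![ε ^ (1 - (i : ℤ)), ε ^ (i : ℤ)] with hEdef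
  set S : Matrix (Fin 2) (Fin 2) ℂ := !![0, 1; 1, 0] with hS
  have hncast : (((n - 1 : ℕ)) : ℤ) = (n : ℤ) - 1 := by
    have : 1 ≤ n := by omega
    push_cast [this]; ring
  have key : ∀ x : ℤ, (ε ^ x) ^ n = 1 := fun x => by
    rw [← zpow_natCast (ε ^ x), ← zpow_mul, mul_comm, zpow_mul, zpow_natCast, hεn, one_zpow]
  have key2 : ∀ x : ℕ, ((ε ^ x) ^ n : ℂ) = 1 := fun x => by
    rw [← pow_mul, mul_comm, pow_mul, hεn, one_pow]
  have hDn : D ^ n = 1 := by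
    rw [hD, Matrix.diagonal_pow]
    have h1 : (![ε ^ (i : ℤ), ε ^ (1 - (i : ℤ))]) ^ n = 1 := by
      funext x
      fin_cases x <;> simp [Pi.pow_apply, key, key2]
    rw [h1]; exact Matrix.diagonal_one
  have hDz : ∀ m : ℕ, D ^ m = D ^ ((m : ZMod n)).val := by
    intro m
    rw [ZMod.val_natCast]
    exact pow_eq_pow_mod m hDn
  have hf : ∀ a b : ZMod n, D ^ a.val * D ^ b.val = D ^ (a + b).val := by
    intro a b
    rw [← pow_add, hDz]
    congr 1
    congr 1
    push_cast [ZMod.natCast_val, ZMod.cast_id]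
    rfl
  have hSD1 : S * D = E * S := by
    rw [hS, hD, hEdef]
    ext x y
    fin_cases x <;> fin_cases y <;>
      simp [Matrix.mul_apply, Fin.sum_univ_two, Matrix.diagonal]
  have hSS : S * S = 1 := by
    rw [hS]
    ext x y
    fin_cases x <;> fin_cases y <;>
      simp [Matrix.mul_apply, Fin.sum_univ_two, Matrix.one_apply]
  have hSD : ∀ m : ℕ, S * D ^ m = E ^ m * S := by
    intro m
    induction m with
    | zero => simp
    | succ m ih =>
        rw [pow_succ, ← mul_assoc, ih, mul_assoc, hSD1, ← mul_assoc, ← pow_succ]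
  have e1 : ε * (ε ^ (i:ℤ)) ^ (n-1 : ℕ) = ε ^ (1 - (i:ℤ)) := by
    rw [← zpow_natCast (ε ^ (i:ℤ)), ← zpow_mul, ← zpow_one_add₀ hε0]
    have h2 : (1 : ℤ) + (i:ℤ) * ((n-1:ℕ):ℤ) = (1 - (i:ℤ)) + (n:ℤ) * i := by
      rw [hncast]; ring
    rw [h2, hper]
  have e2 : ε * (ε ^ (1 - (i:ℤ))) ^ (n-1 : ℕ) = ε ^ (i:ℤ) := by
    rw [← zpow_natCast (ε ^ (1 - (i:ℤ))), ← zpow_mul, ← zpow_one_add₀ hε0]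
    have h2 : (1 : ℤ) + (1 - (i:ℤ)) * ((n-1:ℕ):ℤ) = (i:ℤ) + (n:ℤ) * (1 - i) := by
      rw [hncast]; ring
    rw [h2, hper]
  have hv : ![ε ^ (1-(i:ℤ)), ε ^ (i:ℤ)]
      = ε • (![ε ^ (i:ℤ), ε ^ (1-(i:ℤ))] ^ (n-1)) := by
    funext x
    fin_cases x <;>
      simp only [Pi.smul_apply, Pi.pow_apply, Matrix.cons_val_zero, Matrix.cons_val_one,
        Matrix.head_cons, smul_eq_mul, Fin.isValue]
    · exact e1.symm
    · exact e2.symm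
  have hE1 : E = ε • D ^ (n - 1) := by
    rw [hD, hEdef, Matrix.diagonal_pow, hv, Matrix.diagonal_smul]
  have hE : ∀ m : ℕ, E ^ m = ε ^ m • D ^ ((n - 1) * m) := by
    intro m
    rw [hE1, smul_pow, ← pow_mul]
  have h3 : ∀ a b : ZMod n, D ^ a.val * E ^ b.val = ε ^ b.val • D ^ (a - b).val := by
    intro a b
    rw [hE, mul_smul_comm, ← pow_add, hDz]
    congr 2
    have h1 : (((n - 1 : ℕ)) : ZMod n) = -1 := by
      have : ((n : ℕ) : ZMod n) = 0 := ZMod.natCast_self n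
      push_cast [Nat.cast_sub (by omega : 1 ≤ n), this]; ring
    push_cast [ZMod.natCast_val, ZMod.cast_id, h1]
    ring
  constructor
  · show dihedralRep n ε i (DihedralGroup.r 0) = 1
    show D ^ (0 : ZMod n).val = 1
    rw [ZMod.val_zero, pow_zero]
  · rintro (j | j) (k | k)
    · show D ^ j.val * D ^ k.val = (1 : ℂ) • D ^ (j + k).val
      rw [one_smul, hf]
    · show D ^ j.val * (D ^ (-k : ZMod n).val * S) = (1:ℂ) • (D ^ (-(k - j) : ZMod n).val * S)
      rw [one_smul, ← mul_assoc, hf]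
      congr 2
      ring
    · show (D ^ (-j : ZMod n).val * S) * D ^ k.val
        = ε ^ k.val • (D ^ (-(j + k) : ZMod n).val * S)
      rw [mul_assoc, hSD, ← mul_assoc, h3, smul_mul_assoc]
      congr 3
      ring
    · show (D ^ (-j : ZMod n).val * S) * (D ^ (-k : ZMod n).val * S)
        = ε ^ (-k : ZMod n).val • D ^ (k - j : ZMod n).val
      calc (D ^ (-j : ZMod n).val * S) * (D ^ (-k : ZMod n).val * S)
          = D ^ (-j : ZMod n).val * (S * D ^ (-k : ZMod n).val) * S := by
            rw [mul_assoc, mul_assoc, mul_assoc]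
        _ = D ^ (-j : ZMod n).val * E ^ (-k : ZMod n).val * (S * S) := by
            rw [hSD, mul_assoc, mul_assoc, mul_assoc]
        _ = ε ^ (-k : ZMod n).val • D ^ (-j - -k : ZMod n).val := by
            rw [hSS, mul_one, h3]
        _ = ε ^ (-k : ZMod n).val • D ^ (k - j : ZMod n).val := by
            congr 2; ring
end

section
/- Each projective representation τ_i of D_{2n} (n even) defined by τ_i(aᵏbˡ) = A_iᵏB_iˡ with A_i = diag(εⁱ, ε^{1−i}), B_i = [[0,1],[1,0]], is irreducible, and τ_i is not linearly equivalent to τ_j for i ≠ j, i,j ∈ {1,…,n/2}. -/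
/-!
The eigenvalues `εⁱ, ε¹⁻ⁱ` of `A_i` differ because `n` is even and `2i - 1` is odd, so the only
`A_i`-invariant lines are the coordinate axes, and `B_i` swaps them: `τ_i` is irreducible.
For `1 ≤ i ≠ j ≤ n/2` all exponent differences `±(j - i)`, `±(i + j - 1)` lie strictly between
`-n` and `n` and are nonzero, so `A_j` and `A_i` share no eigenvalue and every matrix
intertwining them vanishes; hence no invertible one exists.
-/

open Matrix

theorem IsPrimitiveRoot.zpow_eq_zpow_iff_dvd {G : Type*} [CommGroupWithZero G] {ζ : G} {k : ℕ}
    [NeZero k] (h : IsPrimitiveRoot ζ k) {a b : ℤ} : ζ ^ a = ζ ^ b ↔ (k : ℤ) ∣ a - b := by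
  rw [← h.zpow_eq_one_iff_dvd, zpow_sub₀ (h.ne_zero (NeZero.ne k)), div_eq_one_iff_eq
    (zpow_ne_zero _ (h.ne_zero (NeZero.ne k)))]

theorem IsPrimitiveRoot.zpow_ne_zpow {G : Type*} [CommGroupWithZero G] {ζ : G} {k : ℕ}
    [NeZero k] (h : IsPrimitiveRoot ζ k) {a b : ℤ} (hab : a ≠ b) (hlt : |a - b| < k) :
    ζ ^ a ≠ ζ ^ b := fun heq ↦
  hab <| sub_eq_zero.mp <| Int.eq_zero_of_abs_lt_dvd (h.zpow_eq_zpow_iff_dvd.mp heq) hlt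

theorem IsPrimitiveRoot.zpow_ne_zpow_one_sub {G : Type*} [CommGroupWithZero G] {ζ : G} {k : ℕ}
    [NeZero k] (h : IsPrimitiveRoot ζ k) (hk : Even k) (a : ℤ) : ζ ^ a ≠ ζ ^ (1 - a) := by
  rw [Ne, h.zpow_eq_zpow_iff_dvd]
  intro hdvd
  have : (2 : ℤ) ∣ a - (1 - a) := (Int.natCast_dvd_natCast.mpr hk.two_dvd).trans hdvd
  omega

namespace Matrix

theorem eq_zero_of_diagonal_mul_eq_mul_diagonal {R m n : Type*} [CommRing R] [NoZeroDivisors R]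
    [Fintype m] [DecidableEq m] [Fintype n] [DecidableEq n] {d : m → R} {e : n → R}
    (hde : ∀ k l, d k ≠ e l) {f : Matrix m n R} (h : diagonal d * f = f * diagonal e) :
    f = 0 := by
  ext k l
  have hkl : (d k - e l) * f k l = 0 := by
    have := congr_fun₂ h k l
    rw [diagonal_mul, mul_diagonal] at this
    linear_combination this
  exact (mul_eq_zero.mp hkl).resolve_left (sub_ne_zero.mpr (hde k l))

end Matrix

theorem Submodule.eq_bot_or_eq_top_of_diagonal_swap_invariant {K : Type*} [Field K] {a b : K}
    (hab : a ≠ b) (W : Submodule K (Fin 2 → K))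
    (hA : ∀ v ∈ W, diagonal ![a, b] *ᵥ v ∈ W) (hB : ∀ v ∈ W, !![0, 1; 1, 0] *ᵥ v ∈ W) :
    W = ⊥ ∨ W = ⊤ := by
  set e : Fin 2 → Fin 2 → K := fun k ↦ Pi.single k 1
  have swap_e0 : !![0, 1; 1, 0] *ᵥ e 0 = e 1 := by
    ext k; fin_cases k <;> simp [e]
  have swap_e1 : !![0, 1; 1, 0] *ᵥ e 1 = e 0 := by
    ext k; fin_cases k <;> simp [e]
  have proj0 : ∀ v : Fin 2 → K, diagonal ![a, b] *ᵥ v - b • v = ((a - b) * v 0) • e 0 := by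
    intro v; ext k; fin_cases k <;> simp [e, sub_mul]
  have proj1 : ∀ v : Fin 2 → K, diagonal ![a, b] *ᵥ v - a • v = ((b - a) * v 1) • e 1 := by
    intro v; ext k; fin_cases k <;> simp [e, sub_mul]
  have mem_e : ∀ k, ∀ c : K, c ≠ 0 → c • e k ∈ W → e k ∈ W := fun k c hc h ↦ by
    simpa [smul_smul, inv_mul_cancel₀ hc] using W.smul_mem c⁻¹ h
  refine or_iff_not_imp_left.mpr fun hW ↦ ?_
  obtain ⟨v, hv, hv0⟩ := W.exists_mem_ne_zero_of_ne_bot hW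
  have he0 : e 0 ∈ W := by
    by_cases h0 : v 0 = 0
    · have h1 : v 1 ≠ 0 := fun h1 ↦ hv0 (by ext k; fin_cases k <;> simp [h0, h1])
      have : e 1 ∈ W := mem_e 1 _ (mul_ne_zero (sub_ne_zero.mpr hab.symm) h1)
        (proj1 v ▸ W.sub_mem (hA v hv) (W.smul_mem a hv))
      exact swap_e1 ▸ hB _ this
    · exact mem_e 0 _ (mul_ne_zero (sub_ne_zero.mpr hab) h0)
        (proj0 v ▸ W.sub_mem (hA v hv) (W.smul_mem b hv))
  have he1 : e 1 ∈ W := swap_e0 ▸ hB _ he0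
  rw [eq_top_iff, ← (Pi.basisFun K (Fin 2)).span_eq, Submodule.span_le, Set.range_subset_iff]
  intro k
  fin_cases k
  · simpa using he0
  · simpa using he1

section dihedralRep

variable {n : ℕ} [NeZero n] (ε : ℂ) (i : ℕ)

theorem dihedralRep_r_one [Fact (1 < n)] :
    dihedralRep n ε i (DihedralGroup.r 1) = diagonal ![ε ^ (i : ℤ), ε ^ (1 - (i : ℤ))] := by
  simp [dihedralRep, ZMod.val_one]

theorem dihedralRep_sr_zero : dihedralRep n ε i (DihedralGroup.sr 0) = !![0, 1; 1, 0] := by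
  simp [dihedralRep]

end dihedralRep

theorem stmt16_general (n : ℕ) [NeZero n] (hn : Even n)
    (ε : ℂ) (hε : IsPrimitiveRoot ε n)
    (i : ℕ) (hi1 : 1 ≤ i) (hi2 : i ≤ n / 2) :
    (∀ W : Submodule ℂ (Fin 2 → ℂ),
      (∀ g : DihedralGroup n, W.map (Matrix.toLin' (dihedralRep n ε i g)) ≤ W) →
      W = ⊥ ∨ W = ⊤) ∧
    (∀ j : ℕ, 1 ≤ j → j ≤ n / 2 → i ≠ j →
      ¬ ∃ f : Matrix (Fin 2) (Fin 2) ℂ, IsUnit f ∧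
        ∀ g : DihedralGroup n,
          dihedralRep n ε j g * f = f * dihedralRep n ε i g) := by
  have : Fact (1 < n) := ⟨by obtain ⟨m, rfl⟩ := hn; have := NeZero.ne (m + m); omega⟩
  refine ⟨fun W hW ↦ ?_, fun j hj1 hj2 hij ⟨f, hf, hcomm⟩ ↦ ?_⟩
  · have hmem (g : DihedralGroup n) (v) (hv : v ∈ W) : dihedralRep n ε i g *ᵥ v ∈ W :=
      hW g (Submodule.mem_map_of_mem hv)
    refine W.eq_bot_or_eq_top_of_diagonal_swap_invariant (hε.zpow_ne_zpow_one_sub hn i) ?_ ?_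
    · simpa only [dihedralRep_r_one] using hmem (.r 1)
    · simpa only [dihedralRep_sr_zero] using hmem (.sr 0)
  · have hA := hcomm (.r 1)
    rw [dihedralRep_r_one, dihedralRep_r_one] at hA
    refine hf.ne_zero (eq_zero_of_diagonal_mul_eq_mul_diagonal ?_ hA)
    simp only [Fin.forall_fin_two, Matrix.cons_val_zero, Matrix.cons_val_one]
    refine ⟨⟨?_, ?_⟩, ?_, ?_⟩ <;>
      exact hε.zpow_ne_zpow (by omega) (abs_sub_lt_iff.mpr ⟨by omega, by omega⟩)

/-- Each `τ_i` is irreducible, and `τ_i`, `τ_j` are not linearly equivalent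
for `i ≠ j`, `i, j ∈ {1, …, n/2}`. -/
theorem stmt16 (n : ℕ) [NeZero n] (hn2 : 2 ≤ n) (hn : Even n)
    (ε : ℂ) (hε : IsPrimitiveRoot ε n)
    (i : ℕ) (hi1 : 1 ≤ i) (hi2 : i ≤ n / 2) :
    (∀ W : Submodule ℂ (Fin 2 → ℂ),
      (∀ g : DihedralGroup n, W.map (Matrix.toLin' (dihedralRep n ε i g)) ≤ W) →
      W = ⊥ ∨ W = ⊤) ∧
    (∀ j : ℕ, 1 ≤ j → j ≤ n / 2 → i ≠ j →
      ¬ ∃ f : Matrix (Fin 2) (Fin 2) ℂ, IsUnit f ∧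
        ∀ g : DihedralGroup n,
          dihedralRep n ε j g * f = f * dihedralRep n ε i g) :=
  stmt16_general n hn ε hε i hi1 hi2
end
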